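/- arXiv:1003.3210 — 5 statements merged into one kernel-verified Lean document; each statement's English description precedes it below -/
import Mathlib

section
/- Let V be a finite-dimensional vector space over a field k of characteristic p, with Z/pZ acting on V^{⊗p} by cyclic permutation of tensor factors. Then the invariants and coinvariants of this action have the same dimension, and the k-linear map sending v to the class of v^{⊗p} in the Tate cohomology Ĥ^0(Z/pZ, V^{⊗p}) = (V^{⊗p})^{Z/pZ} / N(V^{⊗p}) (where N is the norm map) is additive, i.e. (v+w)^{⊗p} ≡ v^{⊗p} + w^{⊗p} modulo the image of the norm map. -/
open scoped TensorProduct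

/-- The generator `σ` of `ℤ/pℤ` acting on `V^{⊗p}` by cyclic permutation of the
tensor factors. -/
noncomputable def cyclicPerm (p : ℕ) (k V : Type*) [CommRing k] [AddCommGroup V]
    [Module k V] : (⨂[k] (_ : Fin p), V) →ₗ[k] ⨂[k] (_ : Fin p), V :=
  (PiTensorProduct.reindex k (fun _ : Fin p => V) (finRotate p)).toLinearMap

/-- The norm map `N = 1 + σ + ⋯ + σ^{p-1}` on `V^{⊗p}`. -/
noncomputable def normMap (p : ℕ) (k V : Type*) [CommRing k] [AddCommGroup V]
    [Module k V] : (⨂[k] (_ : Fin p), V) →ₗ[k] ⨂[k] (_ : Fin p), V :=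
  ∑ j ∈ Finset.range p, cyclicPerm p k V ^ j

section Aux

open Finset
open Fin.NatCast Fin.CommRing

variable {n : ℕ}

lemma finRotate_pow_apply (j : ℕ) (x : Fin (n+1)) : (finRotate (n+1) ^ j) x = x + j := by
  induction j with
  | zero => simp
  | succ m ih =>
    rw [pow_succ']
    simp only [Equiv.Perm.mul_apply, finRotate_succ_apply, ih]
    push_cast
    ring

lemma finRotate_pow_p : finRotate (n+1) ^ (n+1) = 1 := by
  ext x
  simp [finRotate_pow_apply, Fin.natCast_self]

lemma finRotate_pow_mod (j : ℕ) :
    finRotate (n+1) ^ j = finRotate (n+1) ^ (j % (n+1)) := by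
  conv_lhs => rw [← Nat.div_add_mod j (n+1)]
  rw [pow_add, pow_mul, finRotate_pow_p, one_pow, one_mul]

lemma shift_inv_eq_univ [Fact (n+1).Prime] (s : Finset (Fin (n+1))) (c : Fin (n+1))
    (hc : c ≠ 0) (h : ∀ x, x ∈ s → x + c ∈ s) (hne : s.Nonempty) : s = univ := by
  obtain ⟨a, ha⟩ := hne
  have key : ∀ m : ℕ, a + (m : Fin (n+1)) * c ∈ s := by
    intro m
    induction m with
    | zero => simpa using ha
    | succ m ih =>
      have h2 := h _ ih
      have : a + (↑(m + 1) : Fin (n+1)) * c = a + ↑m * c + c := by push_cast; ring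
      rw [this]
      exact h2
  ext b
  simp only [mem_univ, iff_true]
  have hc' : (show ZMod (n+1) from c) ≠ 0 := hc
  set m : ℕ := (((show ZMod (n+1) from b) - (show ZMod (n+1) from a)) *
      (show ZMod (n+1) from c)⁻¹).val with hm
  have : a + (m : Fin (n+1)) * c = b := by
    show (show ZMod (n+1) from a) + (m : ZMod (n+1)) * (show ZMod (n+1) from c)
        = (show ZMod (n+1) from b)
    rw [hm, ZMod.natCast_val, ZMod.cast_id, mul_assoc, inv_mul_cancel₀ hc', mul_one]
    ring
  rw [← this]
  exact key m

lemma free_aux [Fact (n+1).Prime] (s : Finset (Fin (n+1))) (j : ℕ)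
    (hs : s.image ⇑(finRotate (n+1) ^ j) = s) (h1 : s ≠ ∅) (h2 : s ≠ univ) : (n+1) ∣ j := by
  by_contra hj
  have hc : (j : Fin (n+1)) ≠ 0 := by
    intro h0
    exact hj ((ZMod.natCast_eq_zero_iff j (n+1)).mp h0)
  apply h2
  apply shift_inv_eq_univ s (j : Fin (n+1)) hc _ (nonempty_of_ne_empty h1)
  intro x hx
  rw [← finRotate_pow_apply j x, ← hs]
  exact mem_image_of_mem _ hx

lemma image_pow_comp (t : Finset (Fin (n+1))) (a b : ℕ) :
    (t.image ⇑(finRotate (n+1) ^ b)).image ⇑(finRotate (n+1) ^ a)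
      = t.image ⇑(finRotate (n+1) ^ (a + b)) := by
  rw [Finset.image_image, ← Equiv.Perm.coe_mul, ← pow_add]

/-- The orbit setoid for the rotation action on subsets of `Fin (n+1)`. -/
def orbSetoid (n : ℕ) : Setoid (Finset (Fin (n+1))) where
  r s t := ∃ j : ℕ, t = s.image ⇑(finRotate (n+1) ^ j)
  iseqv := by
    constructor
    · intro s
      exact ⟨0, by rw [pow_zero]; simp [Equiv.Perm.coe_one]⟩
    · rintro s t ⟨j, rfl⟩
      refine ⟨j * n, ?_⟩
      rw [image_pow_comp]
      have : j * n + j = (n+1) * j := by ring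
      rw [this, pow_mul, finRotate_pow_p, one_pow]
      simp [Equiv.Perm.coe_one]
    · rintro s t u ⟨j, rfl⟩ ⟨m, rfl⟩
      exact ⟨m + j, image_pow_comp s m j⟩

lemma inj_aux [Fact (n+1).Prime] (t : Finset (Fin (n+1))) (h1 : t ≠ ∅) (h2 : t ≠ univ) :
    ∀ j1 ∈ Finset.range (n+1), ∀ j2 ∈ Finset.range (n+1),
      t.image ⇑(finRotate (n+1) ^ j1) = t.image ⇑(finRotate (n+1) ^ j2) → j1 = j2 := by
  have main : ∀ j1 j2, j1 ≤ j2 → j2 < n+1 →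
      t.image ⇑(finRotate (n+1) ^ j1) = t.image ⇑(finRotate (n+1) ^ j2) → j1 = j2 := by
    intro j1 j2 hle hlt h
    have h' := congrArg (Finset.image ⇑(finRotate (n+1) ^ (n+1-j1))) h
    rw [image_pow_comp, image_pow_comp] at h'
    have e1 : n+1-j1+j1 = n+1 := by omega
    have e2 : n+1-j1+j2 = (n+1) + (j2 - j1) := by omega
    rw [e1, e2, finRotate_pow_p, finRotate_pow_mod ((n+1) + (j2-j1))] at h'
    rw [Nat.add_mod_left, Nat.mod_eq_of_lt (by omega)] at h'
    simp only [Equiv.Perm.coe_one, Finset.image_id] at h'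
    have hdvd := free_aux t (j2 - j1) h'.symm h1 h2
    rcases Nat.eq_zero_or_pos (j2 - j1) with h0 | h0
    · omega
    · have := Nat.le_of_dvd h0 hdvd
      omega
  intro j1 hj1 j2 hj2 h
  rw [Finset.mem_range] at hj1 hj2
  rcases le_total j1 j2 with hle | hle
  · exact main j1 j2 hle hj2 h
  · exact (main j2 j1 hle hj1 h.symm).symm

open scoped Classical in
lemma filter_orbit [Fact (n+1).Prime] (t : Finset (Fin (n+1))) (h1 : t ≠ ∅) (h2 : t ≠ univ) :
    ((univ : Finset (Finset (Fin (n+1)))).filter (fun s => s ≠ ∅ ∧ s ≠ univ)).filter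
        (fun y => Quotient.mk (orbSetoid n) y = Quotient.mk (orbSetoid n) t)
      = (Finset.range (n+1)).image (fun j => t.image ⇑(finRotate (n+1) ^ j)) := by
  ext s
  simp only [Finset.mem_filter, Finset.mem_univ, true_and, Finset.mem_image, Finset.mem_range,
    Quotient.eq]
  constructor
  · rintro ⟨⟨hs1, hs2⟩, hst⟩
    obtain ⟨j, rfl⟩ : ∃ j : ℕ, s = t.image ⇑(finRotate (n+1) ^ j) :=
      (orbSetoid n).iseqv.symm hst
    refine ⟨j % (n+1), Nat.mod_lt _ (Nat.succ_pos n), ?_⟩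
    rw [← finRotate_pow_mod]
  · rintro ⟨j, hj, rfl⟩
    have htne : t.Nonempty := nonempty_of_ne_empty h1
    refine ⟨⟨(htne.image _).ne_empty, ?_⟩, (orbSetoid n).iseqv.symm ⟨j, rfl⟩⟩
    intro hu
    apply h2
    apply Finset.eq_univ_of_card
    have hcard := Finset.card_image_of_injective t (Equiv.injective (finRotate (n+1) ^ j))
    rw [hu] at hcard
    rw [← hcard, Finset.card_univ]

end Aux

section Tensor

open Finset

variable (k V : Type) [Field k] [AddCommGroup V] [Module k V]

lemma fin_pi_finite [Module.Finite k V] : ∀ p : ℕ, Module.Finite k (⨂[k] (_ : Fin p), V) := by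
  intro p
  induction p with
  | zero => exact Module.Finite.equiv (PiTensorProduct.isEmptyEquiv (R := k) (ι := Fin 0)).symm
  | succ n ih =>
    letI := ih
    letI : Module.Finite k (⨂[k] (_ : Fin 1), V) :=
      Module.Finite.equiv (PiTensorProduct.subsingletonEquiv (R := k) (s := fun _ => V) (0 : Fin 1)).symm
    have e : (⨂[k] (_ : Fin (n+1)), V) ≃ₗ[k] (⨂[k] (_ : Fin n), V) ⊗[k] (⨂[k] (_ : Fin 1), V) :=
      (PiTensorProduct.reindex k (fun _ => V) finSumFinEquiv.symm).trans
        (PiTensorProduct.tmulEquiv k V).symm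
    exact Module.Finite.equiv e.symm

variable {n : ℕ} (v w : V)

/-- The tensor with `v` in positions in `s` and `w` elsewhere. -/
noncomputable def Taux (s : Finset (Fin (n+1))) : ⨂[k] (_ : Fin (n+1)), V :=
  PiTensorProduct.tprod k (fun i => if i ∈ s then v else w)

lemma cyclicPerm_Taux (s : Finset (Fin (n+1))) :
    cyclicPerm (n+1) k V (Taux k V v w s) = Taux k V v w (s.image ⇑(finRotate (n+1))) := by
  unfold cyclicPerm Taux
  rw [LinearEquiv.coe_coe, PiTensorProduct.reindex_tprod]
  congr 1
  funext i
  congr 1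
  simp only [eq_iff_iff, Finset.mem_image]
  constructor
  · intro h
    exact ⟨_, h, Equiv.apply_symm_apply _ _⟩
  · rintro ⟨y, hy, rfl⟩
    rwa [Equiv.symm_apply_apply]

lemma cyclicPerm_pow_Taux (j : ℕ) (s : Finset (Fin (n+1))) :
    (cyclicPerm (n+1) k V ^ j) (Taux k V v w s)
      = Taux k V v w (s.image ⇑(finRotate (n+1) ^ j)) := by
  induction j with
  | zero => simp [Equiv.Perm.coe_one]
  | succ m ih =>
    rw [pow_succ', Module.End.mul_apply, ih, cyclicPerm_Taux, Finset.image_image]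
    congr 2
    rw [pow_succ', Equiv.Perm.coe_mul]

lemma normMap_Taux (s : Finset (Fin (n+1))) :
    normMap (n+1) k V (Taux k V v w s)
      = ∑ j ∈ Finset.range (n+1), Taux k V v w (s.image ⇑(finRotate (n+1) ^ j)) := by
  unfold normMap
  rw [LinearMap.sum_apply]
  exact Finset.sum_congr rfl fun j _ => cyclicPerm_pow_Taux k V v w j s

open scoped Classical in
lemma key_mem [Fact (n+1).Prime] :
    (∑ s ∈ (univ : Finset (Finset (Fin (n+1)))).filter (fun s => s ≠ ∅ ∧ s ≠ univ),
        Taux k V v w s) ∈ LinearMap.range (normMap (n+1) k V) := by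
  rw [Finset.sum_partition (orbSetoid n)]
  apply Submodule.sum_mem
  intro xbar hxbar
  obtain ⟨t, ht, rfl⟩ := Finset.mem_image.mp hxbar
  simp only [Finset.mem_filter, Finset.mem_univ, true_and] at ht
  rw [filter_orbit t ht.1 ht.2, Finset.sum_image (inj_aux t ht.1 ht.2)]
  exact LinearMap.mem_range.mpr ⟨Taux k V v w t, normMap_Taux k V v w t⟩

end Tensor

/-- Let `V` be a finite-dimensional vector space over a field `k` of
characteristic `p`, with `ℤ/pℤ` acting on `V^{⊗p}` by cyclic permutation of the factors.
Then (a) the invariants `ker (σ - 1)` and the coinvariants `V^{⊗p}/im (σ - 1)` have the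
same dimension, and (b) the map `v ↦ v^{⊗p}` becomes additive modulo the image of the
norm map `N`: `(v+w)^{⊗p} ≡ v^{⊗p} + w^{⊗p} mod N(V^{⊗p})`. -/
theorem stmt_1 (p : ℕ) [Fact p.Prime] (k : Type) [Field k] [CharP k p]
    (V : Type) [AddCommGroup V] [Module k V] [FiniteDimensional k V] :
    (Module.finrank k (LinearMap.ker (cyclicPerm p k V - LinearMap.id)) =
      Module.finrank k
        ((⨂[k] (_ : Fin p), V) ⧸ LinearMap.range (cyclicPerm p k V - LinearMap.id))) ∧
    (∀ v w : V,
      (LinearMap.range (normMap p k V)).mkQ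
          (PiTensorProduct.tprod k (fun _ : Fin p => v + w)) =
        (LinearMap.range (normMap p k V)).mkQ (PiTensorProduct.tprod k (fun _ : Fin p => v)) +
        (LinearMap.range (normMap p k V)).mkQ (PiTensorProduct.tprod k (fun _ : Fin p => w))) := by
  classical
  obtain ⟨n, rfl⟩ : ∃ n, p = n + 1 :=
    Nat.exists_eq_succ_of_ne_zero (Fact.out (p := p.Prime)).ne_zero
  constructor
  · -- part (a): rank-nullity
    letI : Module.Finite k (⨂[k] (_ : Fin (n+1)), V) := fin_pi_finite k V (n+1)
    have h1 := LinearMap.finrank_range_add_finrank_ker (cyclicPerm (n+1) k V - LinearMap.id)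
    have h2 := Submodule.finrank_quotient_add_finrank
      (LinearMap.range (cyclicPerm (n+1) k V - LinearMap.id))
    omega
  · -- part (b)
    intro v w
    have h1 : Taux k V v w (Finset.univ : Finset (Fin (n+1)))
        = PiTensorProduct.tprod k (fun _ => v) := by
      unfold Taux; congr 1; all_goals (funext i; simp)
    have h0 : Taux k V v w (∅ : Finset (Fin (n+1)))
        = PiTensorProduct.tprod k (fun _ => w) := by
      unfold Taux; congr 1; all_goals (funext i; simp)
    have expand : (PiTensorProduct.tprod k (fun _ : Fin (n+1) => v + w))
        = ∑ s : Finset (Fin (n+1)), Taux k V v w s := by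
      have h := MultilinearMap.map_add_univ
        (PiTensorProduct.tprod k (s := fun _ : Fin (n+1) => V)) (fun _ => v) (fun _ => w)
      rw [show ((fun _ => v) + fun _ => w : Fin (n+1) → V) = fun _ => v + w from rfl] at h
      rw [h]
      apply Finset.sum_congr rfl
      intro s _
      unfold Taux
      congr 1
      all_goals (funext i; by_cases hi : i ∈ s <;> simp [Finset.piecewise, hi])
    have split : ∑ s : Finset (Fin (n+1)), Taux k V v w s
        = (Taux k V v w ∅ + Taux k V v w Finset.univ) +
          ∑ s ∈ (Finset.univ : Finset (Finset (Fin (n+1)))).filter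
            (fun s => s ≠ ∅ ∧ s ≠ Finset.univ), Taux k V v w s := by
      rw [← Finset.sum_filter_add_sum_filter_not Finset.univ
        (fun s : Finset (Fin (n+1)) => s = ∅ ∨ s = Finset.univ)]
      congr 1
      · have : (Finset.univ : Finset (Finset (Fin (n+1)))).filter
            (fun s => s = ∅ ∨ s = Finset.univ) = {∅, Finset.univ} := by
          ext s
          simp [Finset.mem_insert]
        rw [this, Finset.sum_pair]
        exact Finset.univ_nonempty.ne_empty.symm
      · apply Finset.sum_congr
        · ext s
          simp only [Finset.mem_filter, Finset.mem_univ, true_and, not_or]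
        · intros; rfl
    rw [Submodule.mkQ_apply, Submodule.mkQ_apply, Submodule.mkQ_apply,
      ← Submodule.Quotient.mk_add, Submodule.Quotient.eq]
    rw [expand, split, h1, h0]
    have : PiTensorProduct.tprod k (fun _ : Fin (n+1) => w) +
          PiTensorProduct.tprod k (fun _ : Fin (n+1) => v) +
          (∑ s ∈ (Finset.univ : Finset (Finset (Fin (n+1)))).filter
            (fun s => s ≠ ∅ ∧ s ≠ Finset.univ), Taux k V v w s) -
        ((PiTensorProduct.tprod k fun _ => v) + PiTensorProduct.tprod k fun _ => w)
        = ∑ s ∈ (Finset.univ : Finset (Finset (Fin (n+1)))).filter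
            (fun s => s ≠ ∅ ∧ s ≠ Finset.univ), Taux k V v w s := by
      abel
    rw [this]
    exact key_mem k V v w
end

section
/- Let M be a filtered Dieudonné module over W = W(k) (k a finite field of characteristic p) which is annihilated by p. Then the structure maps φ_i: F^i M → M factor through the associated graded gr_F^i M = F^i M / F^{i+1} M, and the induced map φ̃: ⊕_i gr_F^i M → M is an isomorphism of k-vector spaces. -/
open WittVector

/-- A filtered Dieudonné module over `W = W(k)` (Fontaine–Lafaille): a finitely
generated `W`-module `M` with a decreasing, separated, exhaustive filtration `F^• M`
indexed by `ℤ`, together with Frobenius-semilinear maps `φ_i : F^i M → M` such that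
`φ_i|_{F^{i+1}M} = p·φ_{i+1}` and `∑ φ_i : ⊕_i F^i M → M` is surjective. -/
structure FDM (p : ℕ) [Fact p.Prime] (k : Type) [CommRing k] [CharP k p] where
  M : Type
  [addM : AddCommGroup M]
  [modM : Module (WittVector p k) M]
  fg : Module.Finite (WittVector p k) M
  F : ℤ → Submodule (WittVector p k) M
  antitone : ∀ i : ℤ, F (i + 1) ≤ F i
  separated : (⨅ i : ℤ, F i) = ⊥
  exhaustive : (⨆ i : ℤ, F i) = ⊤
  φ : ∀ i : ℤ, F i →ₛₗ[(WittVector.frobenius : WittVector p k →+* WittVector p k)] M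
  rel : ∀ (i : ℤ) (x : M) (h : x ∈ F (i + 1)),
    φ i ⟨x, antitone i h⟩ = (p : WittVector p k) • φ (i + 1) ⟨x, h⟩
  surj : ∀ m : M, ∃ (s : Finset ℤ) (x : ℤ → M) (hx : ∀ i, x i ∈ F i),
    m = ∑ i ∈ s, φ i ⟨x i, hx i⟩

attribute [instance] FDM.addM FDM.modM

variable {p : ℕ} [Fact p.Prime] {k : Type} [Field k] [Fintype k] [CharP k p]

lemma pdvd (x : WittVector p k) (h : x.coeff 0 = 0) : ∃ z : WittVector p k, x = z * p := by
  have h1 : x = verschiebung (x.shift 1) := by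
    have := WittVector.eq_iterate_verschiebung (x := x) (n := 1) (by
      intro i hi; interval_cases i; exact h)
    simpa using this
  obtain ⟨z, hz⟩ := (WittVector.frobenius_bijective p k).surjective (x.shift 1)
  exact ⟨z, by rw [h1, ← hz, WittVector.verschiebung_frobenius]⟩

lemma smul_eq {M : Type} [AddCommGroup M] [Module (WittVector p k) M]
    (hp : ∀ m : M, (p : WittVector p k) • m = 0) (a : WittVector p k) (m : M) :
    a • m = (teichmuller p (a.coeff 0)) • m := by
  obtain ⟨z, hz⟩ := pdvd (a - teichmuller p (a.coeff 0)) (by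
    have : (constantCoeff (a - teichmuller p (a.coeff 0)) : k) = 0 := by
      simp [map_sub, constantCoeff_apply, teichmuller_coeff_zero]
    simpa [constantCoeff_apply] using this)
  have : a • m - (teichmuller p (a.coeff 0)) • m = (z * p) • m := by
    rw [← sub_smul, hz]
  rw [mul_comm, mul_smul, hp] at this

  exact sub_eq_zero.mp this

lemma finM {M : Type} [AddCommGroup M] [Module (WittVector p k) M]
    [Module.Finite (WittVector p k) M]
    (hp : ∀ m : M, (p : WittVector p k) • m = 0) : Finite M := by
  obtain ⟨S, hS⟩ := Module.Finite.fg_top (R := WittVector p k) (M := M)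
  have hsur : Function.Surjective
      (fun c : S → k => ∑ v ∈ S.attach, (teichmuller p (c v)) • (v : M)) := by
    intro m
    have hm : m ∈ Submodule.span (WittVector p k) (S : Set M) := hS ▸ Submodule.mem_top
    obtain ⟨f, -, hf⟩ := Submodule.mem_span_finset.mp (by simpa using hm)
    refine ⟨fun v => (f v).coeff 0, ?_⟩
    simp only []
    rw [← hf]
    rw [← Finset.sum_attach S (fun v => f v • v)]
    exact Finset.sum_congr rfl fun v _ => (smul_eq hp (f v) v).symm
  exact Finite.of_surjective _ hsur


variable (D : FDM p k)

lemma Fmono' (i : ℤ) (n : ℕ) : D.F (i + n) ≤ D.F i := by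
  induction n with
  | zero => simp
  | succ m ih =>
    have h1 : (i + ((m : ℕ) + 1 : ℕ) : ℤ) = (i + m) + 1 := by push_cast; ring
    rw [h1]
    exact le_trans (D.antitone _) ih

lemma Fmono (i j : ℤ) (h : i ≤ j) : D.F j ≤ D.F i := by
  obtain ⟨n, rfl⟩ := Int.le.dest h
  exact Fmono' D i n

lemma part1 (hp : ∀ m : D.M, (p : WittVector p k) • m = 0) :
    ∀ (i : ℤ) (x : D.M) (h : x ∈ D.F (i + 1)), D.φ i ⟨x, D.antitone i h⟩ = 0 := by
  intro i x h
  rw [D.rel i x h, hp]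

lemma phi_zero (hp : ∀ m : D.M, (p : WittVector p k) • m = 0)
    (i : ℤ) (x : D.F i) (h : (x : D.M) ∈ D.F (i + 1)) : D.φ i x = 0 := by
  have := part1 D hp i x h
  convert this using 2

noncomputable def auxΨ (t : Finset ℤ) : ((j : t) → D.F (j : ℤ)) →+ D.M where
  toFun x := ∑ j : t, D.φ (j : ℤ) (x j)
  map_zero' := by simp
  map_add' x y := by
    rw [← Finset.sum_add_distrib]
    exact Finset.sum_congr rfl fun j _ => map_add _ _ _



noncomputable def auxY (t s : Finset ℤ) (x : ℤ → D.M) (hx : ∀ i, x i ∈ D.F i) :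
    (j : t) → D.F (j : ℤ) :=
  fun j => if h : (j : ℤ) ∈ s then ⟨x j, hx j⟩ else 0

lemma auxΨ_auxY (t s : Finset ℤ) (x : ℤ → D.M) (hx : ∀ i, x i ∈ D.F i)
    (hs : ∀ i ∈ s, i ∉ t → D.φ i ⟨x i, hx i⟩ = 0) :
    auxΨ D t (auxY D t s x hx) = ∑ i ∈ s, D.φ i ⟨x i, hx i⟩ := by
  classical
  have h1 : auxΨ D t (auxY D t s x hx)
      = ∑ j ∈ t, (if j ∈ s then D.φ j ⟨x j, hx j⟩ else 0) := by
    rw [← Finset.sum_coe_sort t (fun j => if j ∈ s then D.φ j ⟨x j, hx j⟩ else 0)]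
    refine Finset.sum_congr rfl fun j _ => ?_
    show D.φ (j : ℤ) (auxY D t s x hx j) = _
    unfold auxY
    split_ifs with h
    · simp [h]
    · simp [h]
  rw [h1, Finset.sum_ite_mem]
  refine Finset.sum_subset (Finset.inter_subset_right) fun i hi hni => ?_
  exact hs i hi (fun hit => hni (Finset.mem_inter.mpr ⟨hit, hi⟩))

lemma aux_main (hp : ∀ m : D.M, (p : WittVector p k) • m = 0) (hfin : Finite D.M)
    (a b : ℤ) (ha : D.F a = ⊤) (hb : D.F b = ⊥) (hab : a ≤ b) :
    ∀ (s : Finset ℤ) (x : ℤ → D.M) (hx : ∀ i, x i ∈ D.F i),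
      (∑ i ∈ s, D.φ i ⟨x i, hx i⟩) = 0 → ∀ i ∈ s, x i ∈ D.F (i + 1) := by
  classical
  set t : Finset ℤ := Finset.Icc a (b - 1) with ht
  -- vanishing outside t
  have hvan : ∀ (i : ℤ) (m : D.M) (hm : m ∈ D.F i), i ∉ t → D.φ i ⟨m, hm⟩ = 0 := by
    intro i m hm hit
    rw [ht, Finset.mem_Icc, not_and_or] at hit
    rcases hit with h | h
    · push_neg at h
      have hmem : m ∈ D.F (i + 1) := by
        have : D.F a ≤ D.F (i + 1) := Fmono D (i + 1) a (by omega)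
        exact this (ha ▸ Submodule.mem_top)
      exact phi_zero D hp i ⟨m, hm⟩ hmem
    · push_neg at h
      have hm0 : m = 0 := by
        have : D.F i ≤ D.F b := Fmono D b i (by omega)
        have := this hm
        rw [hb] at this
        simpa using this
      have : (⟨m, hm⟩ : D.F i) = 0 := Subtype.ext hm0
      rw [this, map_zero]
  -- surjectivity of auxΨ
  have hsurj : Function.Surjective (auxΨ D t) := by
    intro m
    obtain ⟨s, x, hx, hm⟩ := D.surj m
    exact ⟨auxY D t s x hx, by
      rw [auxΨ_auxY D t s x hx (fun i hi hit => hvan i (x i) (hx i) hit), hm]⟩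
  -- finiteness
  haveI : ∀ j : ℤ, Finite (D.F j) := fun j => Subtype.finite
  haveI : Finite ((j : t) → D.F (j : ℤ)) := Pi.finite
  -- cardinalities
  set c : ℤ → ℕ := fun j => Nat.card (D.F j) with hc
  have hca : c a = Nat.card D.M := by
    rw [hc]; simp only [ha]
    exact Nat.card_congr Submodule.topEquiv.toEquiv
  have hcb : c b = 1 := by
    rw [hc]; simp only [hb]
    exact Nat.card_unique
  have hdom : Nat.card ((j : t) → D.F (j : ℤ)) = ∏ j ∈ t, c j := by
    rw [Nat.card_pi]
    exact Finset.prod_coe_sort t (fun j => Nat.card (D.F j))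
  -- telescoping
  have htel : ∏ j ∈ t, c j = Nat.card D.M * ∏ j ∈ t, c (j + 1) := by
    have h2 : ∏ j ∈ t, c (j + 1) = ∏ j ∈ Finset.Icc (a + 1) b, c j := by
      have hm : Finset.Icc (a + 1) b = t.map (addRightEmbedding 1) := by
        rw [ht, Finset.map_add_right_Icc]
        congr 1
        omega
      rw [hm, Finset.prod_map]
      rfl
    have h3 : ∏ j ∈ Finset.Icc a b, c j = c a * ∏ j ∈ Finset.Icc (a + 1) b, c j := by
      rw [← Finset.prod_insert (by simp [Finset.mem_Icc])]
      congr 1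
      ext j
      simp only [Finset.mem_Icc, Finset.mem_insert]
      omega
    have h4 : ∏ j ∈ Finset.Icc a b, c j = (∏ j ∈ t, c j) * c b := by
      rw [mul_comm, ← Finset.prod_insert (by simp [ht, Finset.mem_Icc])]
      congr 1
      ext j
      simp only [ht, Finset.mem_Icc, Finset.mem_insert]
      omega
    rw [h2, ← hca, ← h3, h4, hcb, mul_one]
  -- kernel via first isomorphism theorem
  have hker : Nat.card (auxΨ D t).ker * Nat.card D.M = ∏ j ∈ t, c j := by
    have h5 := AddSubgroup.card_eq_card_quotient_mul_card_addSubgroup (auxΨ D t).ker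
    have h6 : Nat.card (((j : t) → D.F (j : ℤ)) ⧸ (auxΨ D t).ker) = Nat.card D.M :=
      Nat.card_congr (QuotientAddGroup.quotientKerEquivOfSurjective _ hsurj).toEquiv
    rw [h6] at h5
    rw [← hdom, h5, mul_comm]
  -- the subset S
  set S : Set ((j : t) → D.F (j : ℤ)) :=
    {y | ∀ j : t, (y j : D.M) ∈ D.F ((j : ℤ) + 1)} with hS
  have hScard : Nat.card S = ∏ j ∈ t, c (j + 1) := by
    have e : S ≃ ((j : t) → D.F ((j : ℤ) + 1)) :=
      { toFun := fun y j => ⟨(y.1 j : D.M), y.2 j⟩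
        invFun := fun z => ⟨fun j => ⟨(z j : D.M), D.antitone _ (z j).2⟩, fun j => (z j).2⟩
        left_inv := fun y => rfl
        right_inv := fun z => rfl }
    rw [Nat.card_congr e, Nat.card_pi]
    exact Finset.prod_coe_sort t (fun j => Nat.card (D.F (j + 1)))
  have hsub : S ⊆ ((auxΨ D t).ker : Set ((j : t) → D.F (j : ℤ))) := by
    intro y hy
    rw [SetLike.mem_coe, AddMonoidHom.mem_ker]
    show ∑ j : {x // x ∈ t}, D.φ (j : ℤ) (y j) = 0
    exact Finset.sum_eq_zero fun (j : {x // x ∈ t}) _ => phi_zero D hp j.1 (y j) (hy j)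
  have hMpos : Nat.card D.M ≠ 0 := Nat.card_ne_zero.mpr ⟨⟨0⟩, hfin⟩
  have hcards : Nat.card ((auxΨ D t).ker : Set ((j : t) → D.F (j : ℤ))) ≤ Nat.card S := by
    have : Nat.card (auxΨ D t).ker = Nat.card S := by
      have := hker
      rw [htel, hScard.symm] at this
      exact Nat.eq_of_mul_eq_mul_right (Nat.pos_of_ne_zero hMpos) (by linarith [this])
    exact le_of_eq this
  have hSeq : S = ((auxΨ D t).ker : Set ((j : t) → D.F (j : ℤ))) := by
    apply Set.eq_of_subset_of_ncard_le hsub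
    rw [← Nat.card_coe_set_eq, ← Nat.card_coe_set_eq]
    exact hcards
  -- conclusion
  intro s x hx hsum i hi
  by_cases hit : i ∈ t
  · have hy : auxY D t s x hx ∈ S := by
      rw [hSeq]
      show auxΨ D t (auxY D t s x hx) = 0
      rw [auxΨ_auxY D t s x hx (fun i hi hitn => hvan i (x i) (hx i) hitn), hsum]
    have := hy ⟨i, hit⟩
    unfold auxY at this
    rw [dif_pos hi] at this
    exact this
  · rw [ht, Finset.mem_Icc, not_and_or] at hit
    rcases hit with h | h
    · push_neg at h
      have : D.F a ≤ D.F (i + 1) := Fmono D (i + 1) a (by omega)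
      exact this (ha ▸ Submodule.mem_top)
    · push_neg at h
      have hm0 : x i = 0 := by
        have h7 : D.F i ≤ D.F b := Fmono D b i (by omega)
        have h8 := h7 (hx i)
        rw [hb] at h8
        simpa using h8
      rw [hm0]
      exact Submodule.zero_mem _

/-- Let `M` be a filtered Dieudonné module over `W(k)` annihilated
by `p`.  Then each structure map `φ_i : F^i M → M` vanishes on `F^{i+1} M`, so it
factors through the associated graded piece `gr_F^i M = F^i M / F^{i+1} M`, and the
induced map `φ̃ : ⊕_i gr_F^i M → M` is an isomorphism of `k`-vector spaces, i.e. it is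
surjective (which is the `surj` axiom) and injective: if a finite sum
`∑_{i ∈ s} φ_i (x_i)` vanishes then each `x_i` lies in `F^{i+1} M`. -/
theorem stmt_2 (p : ℕ) [Fact p.Prime] (k : Type) [Field k] [Fintype k] [CharP k p]
    (D : FDM p k) (hp : ∀ m : D.M, (p : WittVector p k) • m = 0) :
    (∀ (i : ℤ) (x : D.M) (h : x ∈ D.F (i + 1)), D.φ i ⟨x, D.antitone i h⟩ = 0) ∧
    (∀ (s : Finset ℤ) (x : ℤ → D.M) (hx : ∀ i, x i ∈ D.F i),
      (∑ i ∈ s, D.φ i ⟨x i, hx i⟩) = 0 → ∀ i ∈ s, x i ∈ D.F (i + 1)) := by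
  classical
  haveI := D.fg
  have hfin : Finite D.M := finM hp
  refine ⟨part1 D hp, ?_⟩
  -- existence of a with F a = ⊤
  have hdir : Directed (· ≤ ·) D.F := fun i j =>
    ⟨min i j, Fmono D (min i j) i (min_le_left i j), Fmono D (min i j) j (min_le_right i j)⟩
  have hmem : ∀ m : D.M, ∃ i, m ∈ D.F i := by
    intro m
    have h1 : m ∈ ⨆ i, D.F i := by rw [D.exhaustive]; trivial
    exact (Submodule.mem_iSup_of_directed D.F hdir).mp h1
  choose f hf using hmem
  haveI : Fintype D.M := Fintype.ofFinite _
  have hA : (Finset.univ.image f).Nonempty :=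
    ⟨f 0, Finset.mem_image_of_mem f (Finset.mem_univ 0)⟩
  set a := (Finset.univ.image f).min' hA with hadef
  have ha : D.F a = ⊤ := by
    rw [eq_top_iff]
    intro m _
    exact Fmono D a (f m)
      (Finset.min'_le _ _ (Finset.mem_image_of_mem f (Finset.mem_univ m))) (hf m)
  -- existence of b with F b = ⊥
  have hnmem : ∀ m : D.M, m ≠ 0 → ∃ i, m ∉ D.F i := by
    intro m hm
    by_contra h
    push_neg at h
    have h2 : m ∈ ⨅ i, D.F i := (Submodule.mem_iInf _).mpr h
    rw [D.separated] at h2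
    exact hm (by simpa using h2)
  have hex : ∀ m : D.M, ∃ i, a ≤ i ∧ (m ≠ 0 → m ∉ D.F i) := by
    intro m
    by_cases hm : m = 0
    · exact ⟨a, le_rfl, fun h => absurd hm h⟩
    · obtain ⟨i, hi⟩ := hnmem m hm
      exact ⟨max i a, le_max_right _ _,
        fun _ hmm => hi (Fmono D i (max i a) (le_max_left _ _) hmm)⟩
  choose g hg1 hg2 using hex
  have hB : (Finset.univ.image g).Nonempty :=
    ⟨g 0, Finset.mem_image_of_mem g (Finset.mem_univ 0)⟩
  set b := (Finset.univ.image g).max' hB with hbdef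
  have hab : a ≤ b :=
    le_trans (hg1 0) (Finset.le_max' _ _ (Finset.mem_image_of_mem g (Finset.mem_univ 0)))
  have hb : D.F b = ⊥ := by
    rw [eq_bot_iff]
    intro m hm
    rw [Submodule.mem_bot]
    by_contra hm0
    exact hg2 m hm0
      (Fmono D (g m) b (Finset.le_max' _ _ (Finset.mem_image_of_mem g (Finset.mem_univ m))) hm)
  exact aux_main D hp hfin a b ha hb hab
end

section
/- Let M be a W-module with a decreasing separated exhaustive filtration F^•M, and suppose M is p-adically complete and complete with respect to the filtration topology. Then the map ⊕_i F^i M → ⊕_i F^i M given in each summand F^{i+1}M by t − p·id (where t: F^{i+1}M → F^i M is the inclusion into the next summand, placed with opposite sign p on the diagonal) is injective. -/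
/-- Completeness of a module with respect to the topology defined by a decreasing
filtration `F`: every Cauchy family `(a_i)` (meaning `a_j - a_i ∈ F^i` for `j ≥ i`)
has a limit `m` with `m - a_i ∈ F^i` for all `i`. -/
def FiltComplete {W M : Type*} [CommRing W] [AddCommGroup M] [Module W M]
    (F : ℤ → Submodule W M) : Prop :=
  ∀ a : ℤ → M, (∀ i j : ℤ, i ≤ j → a j - a i ∈ F i) → ∃ m : M, ∀ i : ℤ, m - a i ∈ F i

/-- Let `M` be a module over `W = W(k)` with a decreasing, separated,
exhaustive filtration `F^• M`, and suppose `M` is `p`-adically complete and complete for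
the filtration topology.  Then the endomorphism of `⊕_i F^i M` sending `(x_i)_i` to the
tuple with `i`-th component `x_{i+1} - p·x_i` (the map `t - p·id`) is injective:
a finitely supported family `(x_i)` with `x_i ∈ F^i M` and `x_{i+1} - p·x_i = 0` for all
`i` must vanish identically. -/
theorem stmt_3 (p : ℕ) [Fact p.Prime] (k : Type) [CommRing k] [CharP k p]
    (M : Type) [AddCommGroup M] [Module (WittVector p k) M]
    (F : ℤ → Submodule (WittVector p k) M)
    (hanti : ∀ i : ℤ, F (i + 1) ≤ F i)
    (hsep : (⨅ i : ℤ, F i) = ⊥)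
    (hexh : (⨆ i : ℤ, F i) = ⊤)
    (hpadic : IsAdicComplete (Ideal.span {(p : WittVector p k)}) M)
    (hfilt : FiltComplete F)
    (x : ℤ → M) (hx : ∀ i, x i ∈ F i)
    (hsupp : {i : ℤ | x i ≠ 0}.Finite)
    (heq : ∀ i : ℤ, x (i + 1) - (p : WittVector p k) • x i = 0) :
    ∀ i : ℤ, x i = 0 := by
  -- Finite support gives a lower bound below which `x` vanishes.
  obtain ⟨N, hN⟩ := hsupp.bddBelow
  have hlow : ∀ i : ℤ, i < N → x i = 0 := by
    intro i hi
    by_contra h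
    exact absurd (hN h) (not_le.mpr hi)
  -- The recursion propagates zeros upward.
  have hstep : ∀ i : ℤ, x i = 0 → x (i + 1) = 0 := by
    intro i h
    have := heq i
    rw [h, smul_zero, sub_zero] at this
    exact this
  have key : ∀ n : ℕ, x (N - 1 + n) = 0 := by
    intro n
    induction n with
    | zero => exact hlow _ (by omega)
    | succ m ih =>
      have := hstep _ ih
      rwa [show N - 1 + (m : ℤ) + 1 = N - 1 + ((m : ℕ) + 1 : ℕ) by push_cast; ring] at this
  intro i
  rcases lt_or_ge i (N - 1) with h | h
  · exact hlow i (by omega)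
  · have := key (i - (N - 1)).toNat
    rwa [show N - 1 + ((i - (N - 1)).toNat : ℤ) = i by omega] at this
end

section
/- For a ring B with an action of a finite group G, the smash (crossed) product algebra B#G, with underlying module B[G] and multiplication (b₁·g₁)(b₂·g₂) = b₁·(g₁·b₂)·g₁g₂, is an associative unital ring, and its Hochschild homology in degree 0, HH_0(B#G) = (B#G)/[B#G, B#G], decomposes as a direct sum over conjugacy classes ⟨g⟩ of G of summands spanned by elements b·g with g in the class ⟨g⟩. -/
section Smash

variable {B : Type} [Ring B] {G : Type} [Group G] [Fintype G] [DecidableEq G]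

/-- Multiplication of the smash (crossed) product `B # G`: on the underlying module
`B[G] = (G → B)`, `(b₁·g₁)(b₂·g₂) = b₁·(g₁·b₂)·g₁g₂`. -/
noncomputable def smashMul (ρ : G →* RingAut B) (x y : G → B) : G → B :=
  fun k => ∑ g : G, x g * ρ g (y (g⁻¹ * k))

/-- The unit `1·1` of the smash product. -/
noncomputable def smashOne : G → B := fun g => if g = 1 then (1 : B) else 0

/-- The additive subgroup of commutators of the smash product; `HH₀(B#G)` is the
quotient by it. -/
noncomputable def smashComm (ρ : G →* RingAut B) : AddSubgroup (G → B) :=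
  AddSubgroup.closure {z | ∃ x y : G → B, z = smashMul ρ x y - smashMul ρ y x}

/-- Elements of `B#G` supported on a single conjugacy class `c` of `G`. -/
def classSupp (B : Type) [Ring B] {G : Type} [Group G] (c : ConjClasses G) :
    AddSubgroup (G → B) where
  carrier := {x | ∀ g : G, ConjClasses.mk g ≠ c → x g = 0}
  add_mem' := by intro a b ha hb g hg; simp [Pi.add_apply, ha g hg, hb g hg]
  zero_mem' := by intro g hg; rfl
  neg_mem' := by intro a ha g hg; simp [Pi.neg_apply, ha g hg]

/-- The twisted sector of `HH₀(B#G)` attached to a conjugacy class `c`: the image in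
`HH₀ = (B#G)/[B#G, B#G]` of the elements supported on `c`. -/
noncomputable def sector (ρ : G →* RingAut B) (c : ConjClasses G) :
    AddSubgroup ((G → B) ⧸ smashComm ρ) :=
  AddSubgroup.map (QuotientAddGroup.mk' (smashComm ρ)) (classSupp B c)

end Smash

set_option linter.unusedSectionVars false

section Aux

variable {B : Type} [Ring B] {G : Type} [Group G] [Fintype G] [DecidableEq G]

lemma ringAut_one_apply (b : B) : (1 : RingAut B) b = b := rfl
lemma ringAut_mul_apply (f g : RingAut B) (b : B) : (f * g) b = f (g b) := rfl

variable [DecidableEq (ConjClasses G)]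

/-- Projection onto the component supported on a conjugacy class. -/
noncomputable def projCl (c : ConjClasses G) : (G → B) →+ (G → B) where
  toFun x := fun g => if ConjClasses.mk g = c then x g else 0
  map_zero' := by funext g; simp
  map_add' a b := by funext g; by_cases h : ConjClasses.mk g = c <;> simp [h]

lemma projCl_apply (c : ConjClasses G) (x : G → B) (g : G) :
    projCl c x g = if ConjClasses.mk g = c then x g else 0 := rfl

lemma projCl_mem (c : ConjClasses G) (x : G → B) : projCl c x ∈ classSupp B c :=
  fun _ hg => if_neg hg

lemma projCl_eq_self {c : ConjClasses G} {x : G → B} (hx : x ∈ classSupp B c) :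
    projCl c x = x := by
  funext g
  by_cases h : ConjClasses.mk g = c
  · simp [projCl_apply, h]
  · simp [projCl_apply, h, hx g h]

lemma projCl_eq_zero {c c' : ConjClasses G} (hcc : c ≠ c') {x : G → B}
    (hx : x ∈ classSupp B c) : projCl c' x = 0 := by
  funext g
  by_cases h : ConjClasses.mk g = c'
  · have hgc : ConjClasses.mk g ≠ c := fun hh => hcc (hh ▸ h)
    simp [projCl_apply, h, hx g hgc]
  · simp [projCl_apply, h]

/-- A single "basis" element `b·g` of `B#G`. -/
noncomputable def sing (g : G) (b : B) : G → B := fun k => if k = g then b else 0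

lemma sum_sing (x : G → B) : ∑ g : G, sing g (x g) = x := by
  funext k
  rw [Finset.sum_apply]
  simp [sing]

lemma smashMul_sing (ρ : G →* RingAut B) (g₁ g₂ : G) (b₁ b₂ : B) :
    smashMul ρ (sing g₁ b₁) (sing g₂ b₂) = sing (g₁ * g₂) (b₁ * ρ g₁ b₂) := by
  funext k
  simp only [smashMul, sing, ite_mul, zero_mul, Finset.sum_ite_eq', Finset.mem_univ, if_true]
  rw [apply_ite (ρ g₁), map_zero, mul_ite, mul_zero]
  by_cases h : k = g₁ * g₂
  · rw [if_pos h, if_pos (by rw [h, inv_mul_cancel_left])]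
  · rw [if_neg h, if_neg (fun hh => h (by rw [← inv_mul_eq_iff_eq_mul.mp hh]))]

lemma smashMul_sum_left {ι : Type*} (ρ : G →* RingAut B) (s : Finset ι) (f : ι → G → B)
    (y : G → B) : smashMul ρ (∑ i ∈ s, f i) y = ∑ i ∈ s, smashMul ρ (f i) y := by
  funext k
  simp only [smashMul, Finset.sum_apply, Finset.sum_mul]
  rw [Finset.sum_comm]

lemma smashMul_sum_right {ι : Type*} (ρ : G →* RingAut B) (s : Finset ι) (f : ι → G → B)
    (x : G → B) : smashMul ρ x (∑ i ∈ s, f i) = ∑ i ∈ s, smashMul ρ x (f i) := by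
  funext k
  simp only [smashMul, Finset.sum_apply, map_sum, Finset.mul_sum]
  rw [Finset.sum_comm]

lemma comm_sing_mem (ρ : G →* RingAut B) (c : ConjClasses G) (g₁ g₂ : G) (b₁ b₂ : B) :
    projCl c (smashMul ρ (sing g₁ b₁) (sing g₂ b₂) - smashMul ρ (sing g₂ b₂) (sing g₁ b₁))
      ∈ smashComm ρ := by
  set C := smashMul ρ (sing g₁ b₁) (sing g₂ b₂) - smashMul ρ (sing g₂ b₂) (sing g₁ b₁) with hCdef
  have hmk : ConjClasses.mk (g₂ * g₁) = ConjClasses.mk (g₁ * g₂) := by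
    rw [ConjClasses.mk_eq_mk_iff_isConj, isConj_iff]
    exact ⟨g₂⁻¹, by group⟩
  have hC : C ∈ classSupp B (ConjClasses.mk (g₁ * g₂)) := by
    intro g hg
    have h1 : g ≠ g₁ * g₂ := fun h => hg (by rw [h])
    have h2 : g ≠ g₂ * g₁ := fun h => hg (by rw [h, hmk])
    simp [hCdef, smashMul_sing, sing, h1, h2]
  by_cases h : ConjClasses.mk (g₁ * g₂) = c
  · rw [← h, projCl_eq_self hC]
    exact AddSubgroup.subset_closure ⟨sing g₁ b₁, sing g₂ b₂, rfl⟩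
  · rw [projCl_eq_zero h hC]
    exact zero_mem _

lemma comm_decomp (ρ : G →* RingAut B) (x y : G → B) :
    smashMul ρ x y - smashMul ρ y x =
      ∑ g₁ : G, ∑ g₂ : G,
        (smashMul ρ (sing g₁ (x g₁)) (sing g₂ (y g₂)) -
          smashMul ρ (sing g₂ (y g₂)) (sing g₁ (x g₁))) := by
  have h1 : ∑ g₁ : G, ∑ g₂ : G, smashMul ρ (sing g₁ (x g₁)) (sing g₂ (y g₂)) =
      smashMul ρ x y := by
    have h : ∀ g₁ : G, ∑ g₂ : G, smashMul ρ (sing g₁ (x g₁)) (sing g₂ (y g₂)) =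
        smashMul ρ (sing g₁ (x g₁)) y := fun g₁ => by rw [← smashMul_sum_right, sum_sing]
    simp_rw [h]
    rw [← smashMul_sum_left, sum_sing]
  have h2 : ∑ g₁ : G, ∑ g₂ : G, smashMul ρ (sing g₂ (y g₂)) (sing g₁ (x g₁)) =
      smashMul ρ y x := by
    rw [Finset.sum_comm]
    have h : ∀ g₂ : G, ∑ g₁ : G, smashMul ρ (sing g₂ (y g₂)) (sing g₁ (x g₁)) =
        smashMul ρ (sing g₂ (y g₂)) x := fun g₂ => by rw [← smashMul_sum_right, sum_sing]
    simp_rw [h]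
    rw [← smashMul_sum_left, sum_sing]
  simp only [Finset.sum_sub_distrib, h1, h2]

lemma projCl_smashComm (ρ : G →* RingAut B) (c : ConjClasses G) {z : G → B}
    (hz : z ∈ smashComm ρ) : projCl c z ∈ smashComm ρ := by
  revert z
  suffices h : smashComm ρ ≤ AddSubgroup.comap (projCl (B := B) c) (smashComm ρ) by
    intro z hz; exact h hz
  rw [smashComm]
  rw [AddSubgroup.closure_le]
  rintro z ⟨x, y, rfl⟩
  show projCl c (smashMul ρ x y - smashMul ρ y x) ∈ smashComm ρ
  rw [comm_decomp, map_sum]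
  refine AddSubgroup.sum_mem _ fun g₁ _ => ?_
  rw [map_sum]
  exact AddSubgroup.sum_mem _ fun g₂ _ => comm_sing_mem ρ c g₁ g₂ (x g₁) (y g₂)

lemma sum_projCl (x : G → B) :
    ∑ c ∈ Finset.univ.image (ConjClasses.mk (α := G)), projCl c x = x := by
  funext g
  rw [Finset.sum_apply]
  simp only [projCl_apply]
  rw [Finset.sum_ite_eq]
  simp

end Aux


/-- For a ring `B` with an action of a finite group `G` by ring
automorphisms, the smash product `B # G` — underlying module `B[G]`, multiplication
`(b₁·g₁)(b₂·g₂) = b₁·(g₁·b₂)·g₁g₂` — is an associative unital ring, and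
`HH₀(B#G) = (B#G)/[B#G, B#G]` decomposes as the direct sum, over the conjugacy classes
of `G`, of the images of the components spanned by the `b·g` with `g` in a fixed
class. -/
theorem stmt_12 (B : Type) [Ring B] (G : Type) [Group G] [Fintype G] [DecidableEq G]
    [DecidableEq (ConjClasses G)] (ρ : G →* RingAut B) :
    (∀ x y z : G → B, smashMul ρ (smashMul ρ x y) z = smashMul ρ x (smashMul ρ y z)) ∧
    (∀ x : G → B, smashMul ρ smashOne x = x) ∧
    (∀ x : G → B, smashMul ρ x smashOne = x) ∧
    (∀ x y z : G → B, smashMul ρ x (y + z) = smashMul ρ x y + smashMul ρ x z) ∧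
    (∀ x y z : G → B, smashMul ρ (x + y) z = smashMul ρ x z + smashMul ρ y z) ∧
    DirectSum.IsInternal (fun c : ConjClasses G => sector ρ c) := by
  classical
  refine ⟨?_, ?_, ?_, ?_, ?_, ?_, ?_⟩
  · intro x y z
    funext k
    simp only [smashMul, Finset.sum_mul, map_sum, Finset.mul_sum, mul_assoc]
    rw [Finset.sum_comm]
    refine Finset.sum_congr rfl fun h _ => ?_
    rw [← Equiv.sum_comp (Equiv.mulLeft h)]
    refine Finset.sum_congr rfl fun u _ => ?_
    simp [mul_assoc, map_mul, ringAut_mul_apply]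
  · intro x
    funext k
    simp [smashMul, smashOne, ite_mul, ringAut_one_apply]
  · intro x
    funext k
    simp only [smashMul, smashOne]
    rw [Finset.sum_eq_single k] <;> simp +contextual [inv_mul_eq_one, eq_comm]
  · intro x y z
    funext k; simp [smashMul, mul_add, Finset.sum_add_distrib]
  · intro x y z
    funext k; simp [smashMul, add_mul, Finset.sum_add_distrib]
  · -- injective
    rw [injective_iff_map_eq_zero]
    intro f hf
    have hmem : ∀ c : ConjClasses G, ∃ x, x ∈ classSupp B c ∧
        QuotientAddGroup.mk' (smashComm ρ) x = ↑(f c) := by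
      intro c
      exact AddSubgroup.mem_map.mp (f c).2
    choose w hw1 hw2 using hmem
    have hf' : ∑ c ∈ DFinsupp.support f, ((f c : (G → B) ⧸ smashComm ρ)) = 0 := by
      conv_lhs at hf => rw [← DirectSum.sum_support_of f]
      rw [map_sum] at hf
      simpa [DirectSum.coeAddMonoidHom_of] using hf
    have hS : (∑ c ∈ DFinsupp.support f, w c) ∈ smashComm ρ := by
      rw [← QuotientAddGroup.eq_zero_iff]
      have : (QuotientAddGroup.mk' (smashComm ρ)) (∑ c ∈ DFinsupp.support f, w c) = 0 := by
        rw [map_sum]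
        simpa [hw2] using hf'
      exact this
    refine DFinsupp.ext fun c => ?_
    by_cases hc : c ∈ DFinsupp.support f
    · have hwc : w c ∈ smashComm ρ := by
        have h1 := projCl_smashComm ρ c hS
        have h2 : projCl c (∑ c' ∈ DFinsupp.support f, w c') = w c := by
          rw [map_sum, Finset.sum_eq_single c]
          · exact projCl_eq_self (hw1 c)
          · intro c' _ hcc
            exact projCl_eq_zero hcc (hw1 c')
          · intro h; exact absurd hc h
        rwa [h2] at h1
      have : ((f c : (G → B) ⧸ smashComm ρ)) = 0 := by
        rw [← hw2 c]
        exact (QuotientAddGroup.eq_zero_iff _).mpr hwc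
      exact Subtype.ext this
    · exact DFinsupp.notMem_support_iff.mp hc
  · -- surjective
    intro q
    obtain ⟨x, rfl⟩ := QuotientAddGroup.mk'_surjective (smashComm ρ) q
    refine ⟨∑ c ∈ Finset.univ.image (ConjClasses.mk (α := G)),
      DirectSum.of (fun c => sector ρ c) c
        ⟨QuotientAddGroup.mk' (smashComm ρ) (projCl c x),
          AddSubgroup.mem_map.mpr ⟨projCl c x, projCl_mem c x, rfl⟩⟩, ?_⟩
    rw [map_sum]
    simp only [DirectSum.coeAddMonoidHom_of]
    rw [← map_sum, sum_projCl]
end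

section
/- Let B be a ring, p a prime, and let G = Z/pZ act on B^{⊗p} by cyclic permutation of tensor factors. Then the twisted sector of HH_0 of the smash product indexed by the generator σ is isomorphic to HH_0(B): explicitly, the map B → (B^{⊗p} # G), b ↦ (b ⊗ 1 ⊗ ⋯ ⊗ 1)·σ, induces an isomorphism HH_0(B) ≅ HH_0(B^{⊗p} # G)_σ. -/
open scoped TensorProduct

/-- `HH₀` of a ring: the quotient by the additive subgroup generated by commutators. -/
noncomputable def HH0comm (B : Type) [Ring B] : AddSubgroup B :=
  AddSubgroup.closure {z | ∃ a b : B, z = a * b - b * a}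

namespace Stmt13
open Fin.NatCast
variable {B : Type} [Ring B]

/-- quotient map to HH₀(B) -/
noncomputable abbrev qB : B →+ B ⧸ HH0comm B := QuotientAddGroup.mk' (HH0comm B)

lemma qB_mul_comm (u v : B) : qB (u * v) = qB (v * u) := by
  rw [QuotientAddGroup.mk'_eq_mk']
  exact ⟨-(u * v - v * u), neg_mem (AddSubgroup.subset_closure ⟨u, v, rfl⟩), by abel⟩

lemma qB_zsmul (z : ℤ) (a : B) : qB (z • a) = z • qB a :=
  map_zsmul qB z a

/-- interleaving identity at the level of `B` (exact, no quotient) -/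
lemma prod_I : ∀ (n : ℕ) (f g : ℕ → B),
    (List.ofFn fun i : Fin (n+1) => f i * g i).prod
      = f 0 * (List.ofFn fun i : Fin n => g i * f (i+1)).prod * g n := by
  intro n
  induction n with
  | zero => intro f g; simp
  | succ n ih =>
    intro f g
    rw [List.ofFn_succ' (f := fun i : Fin (n+2) => f i * g i), List.concat_eq_append,
      List.prod_append]
    simp only [Fin.coe_castSucc, Fin.val_last, List.prod_cons, List.prod_nil]
    rw [ih f g]
    rw [List.ofFn_succ' (f := fun i : Fin (n+1) => g i * f (i+1)), List.concat_eq_append,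
      List.prod_append]
    simp only [Fin.coe_castSucc, Fin.val_last, List.prod_cons, List.prod_nil]
    simp [mul_assoc]

lemma qB_prod_shift1 (n : ℕ) (f : Fin (n+1) → B) :
    qB (List.ofFn fun i => f (i + 1)).prod = qB (List.ofFn f).prod := by
  rw [List.ofFn_succ' (f := fun i : Fin (n+1) => f (i+1)), List.concat_eq_append,
    List.prod_append, List.ofFn_succ (f := f)]
  simp only [List.prod_cons, List.prod_nil, Fin.last_add_one, mul_one]
  have h : (fun i : Fin n => f (i.castSucc + 1)) = fun i : Fin n => f i.succ := by
    funext i; rw [Fin.coeSucc_eq_succ]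
  rw [h, qB_mul_comm]

lemma qB_prod_shift (n : ℕ) : ∀ (k : ℕ) (f : Fin (n+1) → B),
    qB (List.ofFn fun i => f (i + (k : Fin (n+1)))).prod = qB (List.ofFn f).prod := by
  intro k
  induction k with
  | zero => intro f; simp
  | succ k ih =>
    intro f
    have h : (fun i : Fin (n+1) => f (i + ((k+1 : ℕ) : Fin (n+1))))
        = fun i : Fin (n+1) => (fun j => f (j + (k : Fin (n+1)))) (i + 1) := by
      funext i; push_cast; rw [add_assoc, add_comm (1 : Fin (n+1))]
    rw [h, qB_prod_shift1 n (fun j => f (j + (k : Fin (n+1)))), ih]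

lemma qB_half_shift (n : ℕ) (x z : Fin (n+1) → B) :
    qB (List.ofFn fun i => x i * z i).prod = qB (List.ofFn fun i => z i * x (i + 1)).prod := by
  have key := prod_I n (fun k : ℕ => x (k : Fin (n+1))) (fun k : ℕ => z (k : Fin (n+1)))
  have h1 : (fun i : Fin (n+1) => x ((i : ℕ) : Fin (n+1)) * z ((i : ℕ) : Fin (n+1)))
      = fun i : Fin (n+1) => x i * z i := by
    funext i; rw [Fin.cast_val_eq_self]
  rw [h1] at key
  rw [key]
  rw [List.ofFn_succ' (f := fun i : Fin (n+1) => z i * x (i + 1)), List.concat_eq_append,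
    List.prod_append]
  simp only [List.prod_cons, List.prod_nil, Fin.last_add_one, mul_one]
  have h2 : (fun i : Fin n => z i.castSucc * x (i.castSucc + 1))
      = fun i : Fin n => z ((i : ℕ) : Fin (n+1)) * x (((i : ℕ) + 1 : ℕ) : Fin (n+1)) := by
    funext i
    congr 1
    · congr 1; exact (Fin.ext (by simp [Fin.val_cast_of_lt (Nat.lt_succ_of_lt i.isLt)])).symm
    · congr 1
      apply Fin.ext
      have hi : (i : ℕ) + 1 < n + 1 := Nat.succ_lt_succ i.isLt
      simp [Fin.val_add, Fin.val_cast_of_lt hi, Nat.mod_eq_of_lt hi,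
        Fin.val_cast_of_lt (Nat.lt_succ_of_lt i.isLt)]
  have h3 : ((0 : ℕ) : Fin (n+1)) = 0 := by simp
  have h4 : z (Fin.last n) = z ((n : ℕ) : Fin (n+1)) := by
    congr 1; apply Fin.ext; simp [Fin.val_cast_of_lt (Nat.lt_succ_self n)]
  rw [h2, h3, h4, mul_assoc, qB_mul_comm, mul_assoc]

/-- the key "trace" word identity -/
lemma qB_word (n : ℕ) (x y : Fin (n+1) → B) (c d : Fin (n+1)) (hcd : c + d = 1) :
    qB (List.ofFn fun i => x i * y (i + c)).prod
      = qB (List.ofFn fun i => y i * x (i + d)).prod := by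
  rw [qB_half_shift n x (fun i => y (i + c))]
  have h : (fun i : Fin (n+1) => y (i + c) * x (i + 1))
      = fun i : Fin (n+1) => (fun j => y j * x (j + d)) (i + ((c.val : ℕ) : Fin (n+1))) := by
    funext i
    simp only [Fin.cast_val_eq_self]
    congr 2
    rw [add_assoc, hcd]
  rw [h, qB_prod_shift n c.val (fun j => y j * x (j + d))]

lemma prod_delta0 (m : ℕ) (c : B) :
    (List.ofFn fun i : Fin (m+1) => if i = 0 then c else 1).prod = c := by
  rw [List.ofFn_succ]
  simp [Fin.succ_ne_zero, List.ofFn_const]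

lemma prod_deltaLast (m : ℕ) (c : B) :
    (List.ofFn fun i : Fin (m+1) => if i = Fin.last m then c else 1).prod = c := by
  rw [List.ofFn_succ', List.concat_eq_append, List.prod_append]
  have h : (fun i : Fin m => if i.castSucc = Fin.last m then c else 1) = fun _ : Fin m => (1:B) := by
    funext i
    rw [if_neg (Fin.castSucc_lt_last i).ne]
  simp [h, List.ofFn_const]

lemma prod_delta0Last (m : ℕ) (a b : B) :
    (List.ofFn fun i : Fin (m+2) =>
      if i = 0 then a else if i = Fin.last (m+1) then b else 1).prod = a * b := by
  rw [List.ofFn_succ]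
  simp only [List.prod_cons, if_pos rfl]
  congr 1
  have h : (fun i : Fin (m+1) => if i.succ = 0 then a else if i.succ = Fin.last (m+1) then b else 1)
      = fun i : Fin (m+1) => if i = Fin.last m then b else 1 := by
    funext i
    rw [if_neg (Fin.succ_ne_zero i)]
    by_cases hi : i = Fin.last m
    · subst hi; rw [if_pos rfl, if_pos (by apply Fin.ext; simp)]
    · rw [if_neg hi, if_neg (by intro hq; exact hi (by apply Fin.ext; have := Fin.ext_iff.mp hq; simp at this ⊢; omega))]
  rw [h, prod_deltaLast]

open PiTensorProduct in
/-- multiply-all-factors map -/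
noncomputable def mu (B : Type) [Ring B] (r : ℕ) :
    (⨂[ℤ] (_ : Fin (r+2)), B) →ₗ[ℤ] B :=
  PiTensorProduct.lift (MultilinearMap.mkPiAlgebraFin ℤ (r+2) B)

variable {r : ℕ}

lemma mu_tprod (x : Fin (r+2) → B) :
    mu B r (PiTensorProduct.tprod ℤ x) = (List.ofFn x).prod := by
  simp [mu, PiTensorProduct.lift.tprod]

abbrev σr (r : ℕ) : Multiplicative (ZMod (r+2)) := Multiplicative.ofAdd (1 : ZMod (r+2))

variable (ρ : Multiplicative (ZMod (r+2)) →* RingAut (⨂[ℤ] (_ : Fin (r+2)), B))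

lemma rho_pow
    (hρ : ∀ x : Fin (r+2) → B,
      ρ (σr r) (PiTensorProduct.tprod ℤ x)
        = PiTensorProduct.tprod ℤ (fun i => x (finRotate (r+2) i))) :
    ∀ (n : ℕ) (x : Fin (r+2) → B),
      ρ ((σr r)^n) (PiTensorProduct.tprod ℤ x)
        = PiTensorProduct.tprod ℤ (fun i => x (i + (n : Fin (r+2)))) := by
  intro n
  induction n with
  | zero => intro x; simp only [pow_zero, map_one, Nat.cast_zero, add_zero]; rfl
  | succ n ih =>
    intro x
    rw [pow_succ, map_mul]
    have h1 : (ρ ((σr r)^n) * ρ (σr r)) (PiTensorProduct.tprod ℤ x)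
        = ρ ((σr r)^n) (ρ (σr r) (PiTensorProduct.tprod ℤ x)) := rfl
    rw [h1, hρ x]
    have h2 : (fun i => x (finRotate (r+2) i)) = fun i : Fin (r+2) => x (i + 1) := by
      funext i; rw [finRotate_succ_apply]
    rw [h2, ih (fun i => x (i+1))]
    congr 1
    funext i
    congr 1
    push_cast
    rw [add_assoc, add_comm (n : Fin (r+2)) 1, ← add_assoc]

lemma eq_pow (g : Multiplicative (ZMod (r+2))) :
    g = (σr r)^((Multiplicative.toAdd g).val) := by
  have : Multiplicative.toAdd ((σr r)^((Multiplicative.toAdd g).val))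
      = Multiplicative.toAdd g := by
    rw [toAdd_pow]
    have h2 := ZMod.natCast_rightInverse (n := r+2) (Multiplicative.toAdd g)
    simpa [nsmul_eq_mul] using h2
  exact (Multiplicative.toAdd.injective this).symm

lemma rho_apply_tprod
    (hρ : ∀ x : Fin (r+2) → B,
      ρ (σr r) (PiTensorProduct.tprod ℤ x)
        = PiTensorProduct.tprod ℤ (fun i => x (finRotate (r+2) i)))
    (g : Multiplicative (ZMod (r+2))) (x : Fin (r+2) → B) :
    ρ g (PiTensorProduct.tprod ℤ x)
      = PiTensorProduct.tprod ℤ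
          (fun i => x (i + (((Multiplicative.toAdd g).val : ℕ) : Fin (r+2)))) := by
  conv_lhs => rw [eq_pow g]
  exact rho_pow ρ hρ _ x

lemma trace_lemma
    (hρ : ∀ x : Fin (r+2) → B,
      ρ (σr r) (PiTensorProduct.tprod ℤ x)
        = PiTensorProduct.tprod ℤ (fun i => x (finRotate (r+2) i)))
    (g h : Multiplicative (ZMod (r+2))) (hgh : g * h = σr r)
    (X Y : ⨂[ℤ] (_ : Fin (r+2)), B) :
    qB (mu B r (X * ρ g Y)) = qB (mu B r (Y * ρ h X)) := by
  haveI : Fact (1 < r + 2) := ⟨by omega⟩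
  induction X using PiTensorProduct.induction_on with
  | smul_tprod s x =>
    induction Y using PiTensorProduct.induction_on with
    | smul_tprod t y =>
      rw [map_zsmul (ρ g), map_zsmul (ρ h)]
      rw [smul_mul_assoc, mul_smul_comm, smul_mul_assoc, mul_smul_comm]
      rw [smul_smul, smul_smul, mul_comm t s]
      rw [(mu B r).map_smul, (mu B r).map_smul, qB_zsmul, qB_zsmul]
      congr 1
      -- pure tensor case
      set c : Fin (r+2) := (((Multiplicative.toAdd g).val : ℕ) : Fin (r+2)) with hc
      set d : Fin (r+2) := (((Multiplicative.toAdd h).val : ℕ) : Fin (r+2)) with hd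
      rw [rho_apply_tprod ρ hρ g y, rho_apply_tprod ρ hρ h x]
      rw [PiTensorProduct.tprod_mul_tprod, PiTensorProduct.tprod_mul_tprod]
      rw [mu_tprod, mu_tprod]
      have hcd : c + d = 1 := by
        apply Fin.ext
        rw [Fin.val_add, hc, hd]
        rw [Fin.val_cast_of_lt (ZMod.val_lt _), Fin.val_cast_of_lt (ZMod.val_lt _)]
        have hsum : (Multiplicative.toAdd g) + (Multiplicative.toAdd h) = 1 := by
          have := congrArg Multiplicative.toAdd hgh
          simpa using this
        have := congrArg ZMod.val hsum
        rw [ZMod.val_add, ZMod.val_one] at this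
        rw [this, Fin.val_one]
      exact qB_word (r+1) x y c d hcd
    | add Y1 Y2 h1 h2 =>
      simp only [map_add, mul_add, add_mul, h1, h2]
  | add X1 X2 h1 h2 =>
    simp only [map_add, mul_add, add_mul, h1, h2]

/-- the quotient map onto HH₀ of the smash product -/
noncomputable abbrev mkA (ρ : Multiplicative (ZMod (r+2)) →* RingAut (⨂[ℤ] (_ : Fin (r+2)), B)) :
    (Multiplicative (ZMod (r+2)) → ⨂[ℤ] (_ : Fin (r+2)), B) →+
      (Multiplicative (ZMod (r+2)) → ⨂[ℤ] (_ : Fin (r+2)), B) ⧸ smashComm ρ :=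
  QuotientAddGroup.mk' (smashComm ρ)

lemma relA
    (hρ : ∀ x : Fin (r+2) → B,
      ρ (σr r) (PiTensorProduct.tprod ℤ x)
        = PiTensorProduct.tprod ℤ (fun i => x (finRotate (r+2) i)))
    (x y : Fin (r+2) → B) :
    mkA ρ (Pi.single (σr r) (PiTensorProduct.tprod ℤ (fun i => x i * y (finRotate (r+2) i))))
      = mkA ρ (Pi.single (σr r) (PiTensorProduct.tprod ℤ (fun i => y i * x i))) := by
  classical
  rw [QuotientAddGroup.mk'_eq_mk']
  set X : Multiplicative (ZMod (r+2)) → ⨂[ℤ] (_ : Fin (r+2)), B :=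
    Pi.single (σr r) (PiTensorProduct.tprod ℤ x) with hX
  set Y : Multiplicative (ZMod (r+2)) → ⨂[ℤ] (_ : Fin (r+2)), B :=
    Pi.single (1 : Multiplicative (ZMod (r+2))) (PiTensorProduct.tprod ℤ y) with hY
  have h1 : smashMul ρ X Y
      = Pi.single (σr r) (PiTensorProduct.tprod ℤ (fun i => x i * y (finRotate (r+2) i))) := by
    funext k
    show (∑ g, X g * ρ g (Y (g⁻¹ * k))) = _
    rw [Finset.sum_eq_single (σr r)]
    · rcases eq_or_ne k (σr r) with rfl | hk
      · rw [hX, hY, inv_mul_cancel]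
        simp only [Pi.single_eq_same]
        rw [hρ y, PiTensorProduct.tprod_mul_tprod]; rfl
      · have hne : (σr r)⁻¹ * k ≠ 1 := by
          intro hh; exact hk (inv_mul_eq_one.mp hh).symm
        rw [hY]
        simp only [Pi.single_eq_of_ne hne, map_zero, mul_zero]
        rw [Pi.single_eq_of_ne hk]
    · intro g _ hg
      rw [hX]
      simp [Pi.single_eq_of_ne hg]
    · intro hmem; exact absurd (Finset.mem_univ _) hmem
  have h2 : smashMul ρ Y X
      = Pi.single (σr r) (PiTensorProduct.tprod ℤ (fun i => y i * x i)) := by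
    funext k
    show (∑ g, Y g * ρ g (X (g⁻¹ * k))) = _
    rw [Finset.sum_eq_single (1 : Multiplicative (ZMod (r+2)))]
    · rw [hY]
      simp only [Pi.single_eq_same, inv_one, one_mul, map_one]
      rcases eq_or_ne k (σr r) with rfl | hk
      · rw [hX]
        simp only [Pi.single_eq_same]
        show PiTensorProduct.tprod ℤ y * (PiTensorProduct.tprod ℤ x) = _
        rw [PiTensorProduct.tprod_mul_tprod]; rfl
      · rw [hX]
        simp only [Pi.single_eq_of_ne hk]
        show PiTensorProduct.tprod ℤ y * (0 : ⨂[ℤ] (_ : Fin (r+2)), B) = _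
        simp [Pi.single_eq_of_ne hk]
    · intro g _ hg
      rw [hY]
      simp [Pi.single_eq_of_ne hg]
    · intro hmem; exact absurd (Finset.mem_univ _) hmem
  refine ⟨smashMul ρ Y X - smashMul ρ X Y, AddSubgroup.subset_closure ⟨Y, X, rfl⟩, ?_⟩
  rw [h1, h2]; abel

lemma stepL
    (hρ : ∀ x : Fin (r+2) → B,
      ρ (σr r) (PiTensorProduct.tprod ℤ x)
        = PiTensorProduct.tprod ℤ (fun i => x (finRotate (r+2) i)))
    (v : Fin (r+2) → B) (j : Fin (r+2)) :
    mkA ρ (Pi.single (σr r) (PiTensorProduct.tprod ℤ v))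
      = mkA ρ (Pi.single (σr r) (PiTensorProduct.tprod ℤ
          (Function.update (Function.update v (j+1) (v j * v (j+1))) j 1))) := by
  have hj1 : j + 1 ≠ j := by
    intro hq
    have := congrArg Fin.val hq
    rw [Fin.val_add_one] at this
    split at this
    · next h => rw [h, Fin.val_last] at this; omega
    · omega
  have hxy := relA ρ hρ (Function.update v j 1)
    (Function.update (fun _ : Fin (r+2) => (1:B)) (j+1) (v j))
  have hL : (fun i => Function.update v j 1 i
      * Function.update (fun _ : Fin (r+2) => (1:B)) (j+1) (v j) (finRotate (r+2) i)) = v := by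
    funext i
    rw [finRotate_succ_apply]
    rcases eq_or_ne i j with rfl | hij
    · rw [Function.update_self, Function.update_self, one_mul]
    · rw [Function.update_of_ne hij,
        Function.update_of_ne (fun hq => hij (add_right_cancel hq)), mul_one]
  have hR : (fun i => Function.update (fun _ : Fin (r+2) => (1:B)) (j+1) (v j) i
      * Function.update v j 1 i)
      = Function.update (Function.update v (j+1) (v j * v (j+1))) j 1 := by
    funext i
    rcases eq_or_ne i j with rfl | hij
    · rw [Function.update_self]
      rw [Function.update_of_ne (Ne.symm hj1), Function.update_self, one_mul]
    · rcases eq_or_ne i (j+1) with rfl | hij1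
      · rw [Function.update_self, Function.update_of_ne hj1,
          Function.update_of_ne hj1, Function.update_self]
      · rw [Function.update_of_ne hij1, Function.update_of_ne hij, one_mul,
          Function.update_of_ne hij, Function.update_of_ne hij1]
  rw [hL, hR] at hxy
  exact hxy

lemma collapse
    (hρ : ∀ x : Fin (r+2) → B,
      ρ (σr r) (PiTensorProduct.tprod ℤ x)
        = PiTensorProduct.tprod ℤ (fun i => x (finRotate (r+2) i)))
    (v : Fin (r+2) → B) :
    mkA ρ (Pi.single (σr r) (PiTensorProduct.tprod ℤ v))
      = mkA ρ (Pi.single (σr r) (PiTensorProduct.tprod ℤ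
          (fun i => if i = 0 then (List.ofFn v).prod else 1))) := by
  set w : ℕ → Fin (r+2) → B := fun k i =>
    if (i : ℕ) < k then 1
    else if (i : ℕ) = k then ((List.ofFn v).take (k+1)).prod else v i with hwdef
  have hwlt : ∀ (k : ℕ) (i : Fin (r+2)), (i : ℕ) < k → w k i = 1 := by
    intro k i h; rw [hwdef]; simp only; rw [if_pos h]
  have hweq : ∀ (k : ℕ) (i : Fin (r+2)), (i : ℕ) = k →
      w k i = ((List.ofFn v).take (k+1)).prod := by
    intro k i h; rw [hwdef]; simp only; rw [if_neg (by omega), if_pos h]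
  have hwgt : ∀ (k : ℕ) (i : Fin (r+2)), k < (i : ℕ) → w k i = v i := by
    intro k i h; rw [hwdef]; simp only; rw [if_neg (by omega), if_neg (by omega)]
  have hlen : (List.ofFn v).length = r + 2 := by simp
  have hgetE : ∀ (m : ℕ) (hm : m < r + 2),
      (List.ofFn v)[m]'(by omega) = v ⟨m, hm⟩ := by
    intro m hm
    rw [List.getElem_ofFn]
  have main : ∀ k : ℕ, k < r + 2 →
      mkA ρ (Pi.single (σr r) (PiTensorProduct.tprod ℤ v))
        = mkA ρ (Pi.single (σr r) (PiTensorProduct.tprod ℤ (w k))) := by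
    intro k
    induction k with
    | zero =>
      intro _
      have hw0 : w 0 = v := by
        funext i
        rcases eq_or_ne (i : ℕ) 0 with h0 | h0
        · rw [hweq 0 i h0]
          rw [List.prod_take_succ _ 0 (by omega), hgetE 0 (by omega)]
          have : i = ⟨0, by omega⟩ := Fin.ext h0
          rw [this]
          simp
        · rw [hwgt 0 i (by omega)]
      rw [hw0]
    | succ k ih =>
      intro hk1
      have hk : k < r + 2 := by omega
      rw [ih hk]
      set j : Fin (r+2) := ⟨k, hk⟩ with hj
      have hjadd : j + 1 = (⟨k+1, hk1⟩ : Fin (r+2)) := by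
        apply Fin.ext
        rw [Fin.val_add, hj]
        simp [Fin.val_one, Nat.mod_eq_of_lt hk1]
      have harg : Function.update (Function.update (w k) (j+1) (w k j * w k (j+1))) j 1
          = w (k+1) := by
        funext i
        rcases eq_or_ne i j with rfl | hij
        · rw [Function.update_self, (hwlt (k+1) j (Nat.lt_succ_self k)).symm]
        · rcases eq_or_ne i (j+1) with rfl | hij1
          · rw [Function.update_of_ne hij, Function.update_self]
            rw [hweq k j rfl, hwgt k (j+1) (by rw [hjadd]; exact Nat.lt_succ_self k),
              hweq (k+1) (j+1) (by rw [hjadd])]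
            rw [List.prod_take_succ _ (k+1) (by omega), hgetE (k+1) hk1, hjadd]
          · rw [Function.update_of_ne hij, Function.update_of_ne hij1]
            have hik : (i : ℕ) ≠ k := fun h => hij (Fin.ext h)
            have hik1 : (i : ℕ) ≠ k + 1 := fun h => hij1 (by rw [hjadd]; exact Fin.ext h)
            rcases Nat.lt_or_ge (i : ℕ) k with hlt | hge
            · rw [hwlt k i hlt, hwlt (k+1) i (by omega)]
            · rw [hwgt k i (by omega), hwgt (k+1) i (by omega)]
      rw [stepL ρ hρ (w k) j, harg]
  have top := main (r+1) (by omega)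
  rw [top, stepL ρ hρ (w (r+1)) (Fin.last (r+1))]
  have hlast1 : Fin.last (r + 1) + 1 = (0 : Fin (r+2)) := by
    apply Fin.ext
    rw [Fin.val_add]
    simp
  have harg2 : Function.update (Function.update (w (r+1)) (Fin.last (r+1) + 1)
        (w (r+1) (Fin.last (r+1)) * w (r+1) (Fin.last (r+1) + 1))) (Fin.last (r+1)) 1
      = fun i => if i = 0 then (List.ofFn v).prod else 1 := by
    have hw0 : w (r+1) (Fin.last (r+1) + 1) = 1 := by
      rw [hlast1]
      exact hwlt (r+1) 0 (by simp)
    have hwlast : w (r+1) (Fin.last (r+1)) = (List.ofFn v).prod := by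
      rw [hweq (r+1) (Fin.last (r+1)) (by simp)]
      rw [List.take_of_length_le (le_of_eq hlen)]
    funext i
    rcases eq_or_ne i (Fin.last (r+1)) with rfl | hilast
    · rw [Function.update_self,
        if_neg (fun h => by have := congrArg Fin.val h; simp at this)]
    · have hival : (i : ℕ) < r + 1 := by
        have h2 : (i : ℕ) ≠ r + 1 := fun h => hilast (Fin.ext (by simpa using h))
        have := i.isLt
        omega
      rw [Function.update_of_ne hilast]
      rcases eq_or_ne i 0 with rfl | hi0
      · rw [← hlast1, Function.update_self, hw0, hwlast, mul_one, hlast1, if_pos rfl]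
      · rw [Function.update_of_ne (by rw [hlast1]; exact hi0), if_neg hi0]
        exact hwlt (r+1) i hival
  rw [harg2]

lemma delta_update (c : B) :
    (fun i : Fin (r+2) => if i = 0 then c else 1)
      = Function.update (fun _ : Fin (r+2) => (1:B)) 0 c := by
  funext i; rw [Function.update_apply]

/-- `b ↦ [(b ⊗ 1 ⊗ ⋯ ⊗ 1)·σ]` as an additive hom -/
noncomputable def f0 (ρ : Multiplicative (ZMod (r+2)) →* RingAut (⨂[ℤ] (_ : Fin (r+2)), B)) :
    B →+ ((Multiplicative (ZMod (r+2)) → ⨂[ℤ] (_ : Fin (r+2)), B) ⧸ smashComm ρ) :=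
  AddMonoidHom.mk' (fun b => mkA ρ (Pi.single (σr r)
      (PiTensorProduct.tprod ℤ (fun i : Fin (r+2) => if i = 0 then b else 1)))) (by
    intro a b
    rw [delta_update, delta_update, delta_update, ← map_add (mkA ρ), ← Pi.single_add]
    exact congrArg (fun t => mkA ρ (Pi.single (σr r) t))
      (MultilinearMap.map_update_add (PiTensorProduct.tprod ℤ) (fun _ : Fin (r+2) => (1:B)) 0 a b))

lemma f0_apply (ρ : Multiplicative (ZMod (r+2)) →* RingAut (⨂[ℤ] (_ : Fin (r+2)), B)) (b : B) :
    f0 ρ b = mkA ρ (Pi.single (σr r)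
      (PiTensorProduct.tprod ℤ (fun i : Fin (r+2) => if i = 0 then b else 1))) := rfl

lemma collapse'
    (hρ : ∀ x : Fin (r+2) → B,
      ρ (σr r) (PiTensorProduct.tprod ℤ x)
        = PiTensorProduct.tprod ℤ (fun i => x (finRotate (r+2) i)))
    (X : ⨂[ℤ] (_ : Fin (r+2)), B) :
    mkA ρ (Pi.single (σr r) X) = f0 ρ (mu B r X) := by
  induction X using PiTensorProduct.induction_on with
  | smul_tprod s x =>
    have hs : Pi.single (M := fun _ : Multiplicative (ZMod (r+2)) => ⨂[ℤ] (_ : Fin (r+2)), B)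
        (σr r) (s • PiTensorProduct.tprod ℤ x)
        = s • Pi.single (σr r) (PiTensorProduct.tprod ℤ x) := Pi.single_smul _ _ _
    rw [hs, AddMonoidHom.map_zsmul (mkA ρ), collapse ρ hρ x, (mu B r).map_smul,
      AddMonoidHom.map_zsmul (f0 ρ), mu_tprod, f0_apply]
  | add X Y hX hY =>
    rw [Pi.single_add, map_add, map_add, map_add, hX, hY]

lemma f0_mul_comm
    (hρ : ∀ x : Fin (r+2) → B,
      ρ (σr r) (PiTensorProduct.tprod ℤ x)
        = PiTensorProduct.tprod ℤ (fun i => x (finRotate (r+2) i)))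
    (a b : B) : f0 ρ (a * b) = f0 ρ (b * a) := by
  have h1 := relA ρ hρ (fun i : Fin (r+2) => if i = 0 then a else 1)
    (fun i : Fin (r+2) => if i = 0 then b else 1)
  have hL : (fun i : Fin (r+2) => (if i = 0 then a else 1)
        * (if finRotate (r+2) i = 0 then b else 1))
      = (fun i : Fin (r+2) => if i = 0 then a else if i = Fin.last (r+1) then b else 1) := by
    funext i
    rw [finRotate_succ_apply]
    rcases eq_or_ne i 0 with rfl | hi0
    · rw [if_pos rfl, if_pos rfl, if_neg (by
        intro h
        have := congrArg Fin.val h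
        rw [Fin.val_add] at this
        simp at this), mul_one]
    · rw [if_neg hi0, if_neg hi0, one_mul]
      rcases eq_or_ne i (Fin.last (r+1)) with rfl | hlast
      · rw [if_pos (by apply Fin.ext; rw [Fin.val_add]; simp), if_pos rfl]
      · rw [if_neg (by
          intro h
          apply hlast
          apply Fin.ext
          have hv := congrArg Fin.val h
          rw [Fin.val_add] at hv
          have h1v : ((1 : Fin (r+2)) : ℕ) = 1 := rfl
          rw [h1v] at hv
          simp only [Fin.val_zero, Fin.val_last] at hv ⊢
          have := i.isLt
          rcases Nat.lt_or_ge ((i : ℕ) + 1) (r+2) with hc | hc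
          · rw [Nat.mod_eq_of_lt hc] at hv; omega
          · omega), if_neg hlast]
  have hR : (fun i : Fin (r+2) => (if i = 0 then b else 1) * (if i = 0 then a else 1))
      = (fun i : Fin (r+2) => if i = 0 then b * a else 1) := by
    funext i
    rcases eq_or_ne i 0 with rfl | hi0
    · simp
    · simp [hi0]
  rw [hL, hR] at h1
  have h2 := collapse ρ hρ
    (fun i : Fin (r+2) => if i = 0 then a else if i = Fin.last (r+1) then b else 1)
  rw [prod_delta0Last] at h2
  rw [f0_apply, f0_apply]
  exact h2.symm.trans h1

/-- `x·σ + (other sectors) ↦ [μ(x)]`, reading off the `σ`-component -/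
noncomputable def psi0 (B : Type) [Ring B] (r : ℕ) :
    (Multiplicative (ZMod (r+2)) → ⨂[ℤ] (_ : Fin (r+2)), B) →+ B ⧸ HH0comm B :=
  (qB.comp (mu B r).toAddMonoidHom).comp
    (Pi.evalAddMonoidHom (fun _ : Multiplicative (ZMod (r+2)) => ⨂[ℤ] (_ : Fin (r+2)), B) (σr r))

lemma psi0_apply (x : Multiplicative (ZMod (r+2)) → ⨂[ℤ] (_ : Fin (r+2)), B) :
    psi0 B r x = qB (mu B r (x (σr r))) := rfl

lemma psi0_smashMul
    (hρ : ∀ x : Fin (r+2) → B,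
      ρ (σr r) (PiTensorProduct.tprod ℤ x)
        = PiTensorProduct.tprod ℤ (fun i => x (finRotate (r+2) i)))
    (x y : Multiplicative (ZMod (r+2)) → ⨂[ℤ] (_ : Fin (r+2)), B) :
    psi0 B r (smashMul ρ x y) = psi0 B r (smashMul ρ y x) := by
  rw [psi0_apply, psi0_apply]
  show qB (mu B r (∑ g, x g * ρ g (y (g⁻¹ * σr r))))
    = qB (mu B r (∑ g, y g * ρ g (x (g⁻¹ * σr r))))
  rw [map_sum, map_sum, map_sum, map_sum]
  refine Fintype.sum_equiv
    ((Equiv.inv (Multiplicative (ZMod (r+2)))).trans (Equiv.mulRight (σr r))) _ _ ?_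
  intro g
  have hgh : g * (g⁻¹ * σr r) = σr r := by rw [← mul_assoc, mul_inv_cancel, one_mul]
  have hfix : (g⁻¹ * σr r)⁻¹ * σr r = g := by
    rw [mul_inv_rev, inv_inv, mul_assoc, mul_comm g (σr r), ← mul_assoc,
      inv_mul_cancel, one_mul]
  have htr := trace_lemma ρ hρ g (g⁻¹ * σr r) hgh (x g) (y (g⁻¹ * σr r))
  show qB (mu B r (x g * ρ g (y (g⁻¹ * σr r)))) = _
  rw [htr]
  show _ = qB (mu B r (y (g⁻¹ * σr r) * ρ (g⁻¹ * σr r) (x ((g⁻¹ * σr r)⁻¹ * σr r))))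
  rw [hfix]

end Stmt13

set_option maxHeartbeats 2000000 in
/-- Let `B` be a ring, `p` a prime, and let `G = ℤ/pℤ` act on
`B^{⊗p}` by cyclic permutation of the tensor factors (generator `σ`).  Then the
`σ`-twisted sector of `HH₀` of the smash product is isomorphic to `HH₀(B)`: the map
`b ↦ (b ⊗ 1 ⊗ ⋯ ⊗ 1)·σ` induces an isomorphism `HH₀(B) ≅ HH₀(B^{⊗p} # G)_σ`. -/
theorem stmt_13 (p : ℕ) [Fact p.Prime] (B : Type) [Ring B]
    (ρ : Multiplicative (ZMod p) →* RingAut (⨂[ℤ] (_ : Fin p), B))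
    (hρ : ∀ x : Fin p → B,
      ρ (Multiplicative.ofAdd (1 : ZMod p))
          (PiTensorProduct.tprod ℤ x) =
        PiTensorProduct.tprod ℤ (fun i => x (finRotate p i))) :
    ∃ e : (B ⧸ HH0comm B) ≃+
        sector ρ (ConjClasses.mk (Multiplicative.ofAdd (1 : ZMod p))),
      ∀ b : B,
        ((e (QuotientAddGroup.mk b)) :
            (Multiplicative (ZMod p) → ⨂[ℤ] (_ : Fin p), B) ⧸ smashComm ρ) =
          QuotientAddGroup.mk
            (Pi.single (Multiplicative.ofAdd (1 : ZMod p))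
              (PiTensorProduct.tprod ℤ (fun i : Fin p => if i = 0 then b else 1))) := by
  obtain ⟨r, rfl⟩ : ∃ r, p = r + 2 :=
    ⟨p - 2, by have := (Fact.out : p.Prime).two_le; omega⟩
  classical
  -- the inverse map, descended from ψ₀
  have hker : smashComm ρ ≤ (Stmt13.psi0 B r).ker := by
    rw [smashComm, AddSubgroup.closure_le]
    rintro z ⟨x, y, rfl⟩
    simp only [SetLike.mem_coe, AddMonoidHom.mem_ker, map_sub, sub_eq_zero]
    exact Stmt13.psi0_smashMul ρ hρ x y
  set Ψ : ((Multiplicative (ZMod (r+2)) → ⨂[ℤ] (_ : Fin (r+2)), B) ⧸ smashComm ρ)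
      →+ B ⧸ HH0comm B := QuotientAddGroup.lift (smashComm ρ) (Stmt13.psi0 B r) hker with hΨ
  -- the forward map, descended from f₀
  have hfker : HH0comm B ≤ (Stmt13.f0 ρ).ker := by
    rw [HH0comm, AddSubgroup.closure_le]
    rintro z ⟨a, b, rfl⟩
    simp only [SetLike.mem_coe, AddMonoidHom.mem_ker, map_sub, sub_eq_zero]
    exact Stmt13.f0_mul_comm ρ hρ a b
  set F : (B ⧸ HH0comm B) →+
      ((Multiplicative (ZMod (r+2)) → ⨂[ℤ] (_ : Fin (r+2)), B) ⧸ smashComm ρ) :=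
    QuotientAddGroup.lift (HH0comm B) (Stmt13.f0 ρ) hfker with hF
  have hFmk : ∀ b : B, F (QuotientAddGroup.mk b) = Stmt13.f0 ρ b := fun b => rfl
  have hΨmk : ∀ x, Ψ (QuotientAddGroup.mk' (smashComm ρ) x) = Stmt13.psi0 B r x :=
    fun x => rfl
  have hmem : ∀ t, F t ∈ sector ρ (ConjClasses.mk (Multiplicative.ofAdd (1 : ZMod (r+2)))) := by
    intro t
    refine QuotientAddGroup.induction_on t (fun b => ?_)
    refine ⟨Pi.single (Stmt13.σr r)
      (PiTensorProduct.tprod ℤ (fun i : Fin (r+2) => if i = 0 then b else 1)), ?_, ?_⟩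
    · intro g hg
      apply Pi.single_eq_of_ne
      intro hgσ
      exact hg (by rw [hgσ])
    · rw [hFmk, Stmt13.f0_apply]
  set Fc : (B ⧸ HH0comm B) →+
      sector ρ (ConjClasses.mk (Multiplicative.ofAdd (1 : ZMod (r+2)))) :=
    F.codRestrict _ hmem with hFc
  have hleft : ∀ t, Ψ ((Fc t : _)) = t := by
    intro t
    refine QuotientAddGroup.induction_on t (fun b => ?_)
    show Ψ (F (QuotientAddGroup.mk b)) = QuotientAddGroup.mk b
    rw [hFmk, Stmt13.f0_apply, hΨmk, Stmt13.psi0_apply, Pi.single_eq_same,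
      Stmt13.mu_tprod, Stmt13.prod_delta0 (r+1) b]
    rfl
  have hright : ∀ s : sector ρ (ConjClasses.mk (Multiplicative.ofAdd (1 : ZMod (r+2)))),
      Fc (Ψ (s : _)) = s := by
    rintro ⟨t, ht⟩
    obtain ⟨x, hx, rfl⟩ := AddSubgroup.mem_map.mp ht
    apply Subtype.ext
    show F (Ψ (QuotientAddGroup.mk' (smashComm ρ) x)) = QuotientAddGroup.mk' (smashComm ρ) x
    have hxx : x = Pi.single (Stmt13.σr r) (x (Stmt13.σr r)) := by
      funext g
      rcases eq_or_ne g (Stmt13.σr r) with rfl | hg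
      · rw [Pi.single_eq_same]
      · rw [Pi.single_eq_of_ne hg]
        exact hx g (fun h => hg (isConj_iff_eq.mp (ConjClasses.mk_eq_mk_iff_isConj.mp h)))
    have h1 : Ψ (QuotientAddGroup.mk' (smashComm ρ) x) = Stmt13.psi0 B r x := rfl
    rw [h1, Stmt13.psi0_apply]
    have h2 : F (Stmt13.qB (Stmt13.mu B r (x (Stmt13.σr r))))
        = Stmt13.f0 ρ (Stmt13.mu B r (x (Stmt13.σr r))) := rfl
    rw [h2, ← Stmt13.collapse' ρ hρ (x (Stmt13.σr r))]
    exact congrArg _ hxx.symm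
  refine ⟨{ toFun := Fc, invFun := fun s => Ψ (s : _),
            left_inv := hleft, right_inv := hright, map_add' := Fc.map_add }, ?_⟩
  intro b
  show (F (QuotientAddGroup.mk b) : _) = _
  rw [hFmk, Stmt13.f0_apply]
  rfl
end
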